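/- Let x be the real sequence defined by x_k = (−1)^k for k ∉ A and x_k = k for k ∈ A, where A ∈ I is an infinite set with I-natural density zero. Then for 0 ≤ r < 1, the rough I-statistical limit set of x with degree r is empty. -/

import Mathlib

open scoped Classical

/-- `I` is a nontrivial admissible ideal on `ℕ`. -/
def IsAdmissibleIdeal (I : Set (Set ℕ)) : Prop :=
  (∅ : Set ℕ) ∈ I ∧ (Set.univ : Set ℕ) ∉ I ∧
  (∀ A B : Set ℕ, A ∈ I → B ∈ I → A ∪ B ∈ I) ∧
  (∀ A B : Set ℕ, A ∈ I → B ⊆ A → B ∈ I) ∧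
  (∀ n : ℕ, ({n} : Set ℕ) ∈ I)

/-- `(1/n) * |{k ≤ n : P k}|` (indices `k` running over `1,…,n`). -/
noncomputable def stCount (P : ℕ → Prop) (n : ℕ) : ℝ :=
  ((Finset.Icc 1 n).filter P).card / n

/-- `I`-convergence of a real sequence `a` to `L`. -/
def ITendsto (I : Set (Set ℕ)) (a : ℕ → ℝ) (L : ℝ) : Prop :=
  ∀ ε : ℝ, 0 < ε → {n : ℕ | ε ≤ |a n - L|} ∈ I

/-- `ξ` is a rough `I`-statistical limit of `x` with roughness degree `r`
(the `δ` formulation). -/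
def RoughIStatLim {X : Type*} [NormedAddCommGroup X] (I : Set (Set ℕ))
    (x : ℕ → X) (r : ℝ) (ξ : X) : Prop :=
  ∀ ε : ℝ, 0 < ε → ∀ δ : ℝ, 0 < δ →
    {n : ℕ | δ ≤ stCount (fun k => r + ε ≤ ‖x k - ξ‖) n} ∈ I

/-- `ξ` is a rough `I`-statistical limit of `x` with roughness degree `r`
(the `I`-density formulation). -/
def RoughIStatLim' {X : Type*} [NormedAddCommGroup X] (I : Set (Set ℕ))
    (x : ℕ → X) (r : ℝ) (ξ : X) : Prop :=
  ∀ ε : ℝ, 0 < ε → ITendsto I (stCount (fun k => r + ε ≤ ‖x k - ξ‖)) 0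

/-- `x` is `I`-statistically convergent to `ξ`. -/
def IStatConv {X : Type*} [NormedAddCommGroup X] (I : Set (Set ℕ))
    (x : ℕ → X) (ξ : X) : Prop :=
  ∀ ε : ℝ, 0 < ε → ∀ δ : ℝ, 0 < δ →
    {n : ℕ | δ ≤ stCount (fun k => ε ≤ ‖x k - ξ‖) n} ∈ I

/-- `c` is an `I`-statistical cluster point of `x`. -/
def IStatClusterPt {X : Type*} [NormedAddCommGroup X] (I : Set (Set ℕ))
    (x : ℕ → X) (c : X) : Prop :=
  ∀ ε : ℝ, 0 < ε → ¬ ITendsto I (stCount (fun k => ‖x k - c‖ < ε)) 0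

/-- `x` is `I`-statistically bounded. -/
def IStatBounded {X : Type*} [NormedAddCommGroup X] (I : Set (Set ℕ))
    (x : ℕ → X) : Prop :=
  ∃ G : ℝ, 0 < G ∧ ∀ δ : ℝ, 0 < δ →
    {n : ℕ | δ ≤ stCount (fun k => G ≤ ‖x k‖) n} ∈ I

/-! At most one of the values `±1` lies at distance less than `1` from a candidate limit `ξ`, so
`x` stays at distance at least `1 > r` from `ξ` on a whole parity class outside `A`. A parity class
fills at least `3/8` of `1, …, n` once `n ≥ 4`, and `A` has `I`-density zero, so for all such `n`
outside a member of `I` at least a quarter of `1, …, n` are far from `ξ`. If `ξ` were a rough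
limit, `ℕ` would be the union of two members of `I` and a finite set, against properness of `I`. -/

open Finset

namespace IsAdmissibleIdeal

variable {I : Set (Set ℕ)}

theorem finite_mem (hI : IsAdmissibleIdeal I) {F : Set ℕ} (hF : F.Finite) : F ∈ I := by
  obtain ⟨hempty, -, hunion, -, hsingleton⟩ := hI
  induction F, hF using Set.Finite.induction_on with
  | empty => exact hempty
  | insert _ _ ih => exact hunion _ _ (hsingleton _) ih

theorem union_mem (hI : IsAdmissibleIdeal I) {S T : Set ℕ} (hS : S ∈ I) (hT : T ∈ I) :
    S ∪ T ∈ I :=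
  hI.2.2.1 S T hS hT

theorem exists_ge_notMem (hI : IsAdmissibleIdeal I) {S : Set ℕ} (hS : S ∈ I) (N : ℕ) :
    ∃ n, N ≤ n ∧ n ∉ S := by
  by_contra! hcofinite
  have hcover : Set.univ ⊆ S ∪ Set.Iio N := fun n _ =>
    (lt_or_ge n N).elim Or.inr fun hn => Or.inl (hcofinite n hn)
  exact hI.2.1 <| hI.2.2.2.1 _ _ (hI.union_mem hS (hI.finite_mem (Set.finite_Iio N))) hcover

end IsAdmissibleIdeal

theorem stCount_nonneg (P : ℕ → Prop) (n : ℕ) : 0 ≤ stCount P n := by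
  unfold stCount
  positivity

theorem stCount_le_add {P Q R : ℕ → Prop} (h : ∀ k, P k → Q k ∨ R k) (n : ℕ) :
    stCount P n ≤ stCount Q n + stCount R n := by
  unfold stCount
  rw [← add_div]
  gcongr
  norm_cast
  calc #{k ∈ Icc 1 n | P k} ≤ #({k ∈ Icc 1 n | Q k} ∪ {k ∈ Icc 1 n | R k}) := by
        refine card_le_card fun k hk => ?_
        rw [mem_filter] at hk
        rcases h k hk.2 with hQ | hR
        · exact mem_union_left _ (mem_filter.2 ⟨hk.1, hQ⟩)
        · exact mem_union_right _ (mem_filter.2 ⟨hk.1, hR⟩)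
    _ ≤ _ := card_union_le _ _

theorem le_two_mul_card_filter_mod_two_add_ite {m : ℕ} (hm : m < 2) (n : ℕ) :
    n ≤ 2 * #{k ∈ Icc 1 n | k % 2 = m} + if n % 2 = m then 0 else 1 := by
  induction n with
  | zero => split <;> simp
  | succ n ih =>
    rw [← insert_Icc_right_eq_Icc_add_one (by omega), filter_insert]
    by_cases h : (n + 1) % 2 = m
    · rw [if_neg (by omega : ¬n % 2 = m)] at ih
      rw [if_pos h, if_pos h, card_insert_of_notMem (by simp)]
      omega
    · rw [if_pos (by omega : n % 2 = m)] at ih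
      rw [if_neg h, if_neg h]
      omega

theorem three_eighths_le_stCount_mod_two {m n : ℕ} (hm : m < 2) (hn : 4 ≤ n) :
    3 / 8 ≤ stCount (fun k => k % 2 = m) n := by
  have hcount : (n : ℝ) ≤ 2 * #{k ∈ Icc 1 n | k % 2 = m} + 1 := by
    have := le_two_mul_card_filter_mod_two_add_ite hm n
    exact_mod_cast (by split at this <;> omega)
  have hn' : (4 : ℝ) ≤ n := by exact_mod_cast hn
  rw [stCount, filter_congr_decidable, le_div_iff₀ (by positivity)]
  linarith

theorem exists_mod_two_one_le_abs_neg_one_pow_sub (ξ : ℝ) :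
    ∃ m < 2, ∀ k, k % 2 = m → 1 ≤ |(-1 : ℝ) ^ k - ξ| := by
  rcases le_or_gt ξ 0 with hξ | hξ
  · refine ⟨0, by norm_num, fun k hk => ?_⟩
    rw [(Nat.even_iff.2 hk).neg_one_pow, abs_of_nonneg (by linarith)]
    linarith
  · refine ⟨1, by norm_num, fun k hk => ?_⟩
    rw [(Nat.odd_iff.2 hk).neg_one_pow, abs_of_neg (by linarith)]
    linarith

theorem stmt_17_general (I : Set (Set ℕ)) (hI : IsAdmissibleIdeal I) (A : Set ℕ)
    (hd : ITendsto I (stCount (fun k => k ∈ A)) 0)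
    (x : ℕ → ℝ) (hx : ∀ k : ℕ, x k = if k ∈ A then (k : ℝ) else (-1 : ℝ) ^ k)
    (r : ℝ) (hr : r < 1) :
    {ξ : ℝ | RoughIStatLim I x r ξ} = ∅ := by
  refine Set.eq_empty_of_forall_notMem fun ξ hξ => ?_
  obtain ⟨m, hm, hfar⟩ := exists_mod_two_one_le_abs_neg_one_pow_sub ξ
  set P : ℕ → Prop := fun k => r + (1 - r) ≤ ‖x k - ξ‖
  have hexceptional : {n | 1 / 4 ≤ stCount P n} ∪ {n | 1 / 8 ≤ |stCount (· ∈ A) n - 0|} ∈ I :=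
    hI.union_mem (hξ (1 - r) (by linarith) (1 / 4) (by norm_num)) (hd (1 / 8) (by norm_num))
  obtain ⟨n, hn, hnotMem⟩ := hI.exists_ge_notMem hexceptional 4
  simp only [Set.mem_union, Set.mem_ofPred_eq, not_or, not_le, sub_zero,
    abs_of_nonneg (stCount_nonneg _ _)] at hnotMem
  have hsplit : stCount (fun k => k % 2 = m) n ≤ stCount P n + stCount (· ∈ A) n := by
    refine stCount_le_add (fun k hk => or_iff_not_imp_right.2 fun hkA => ?_) n
    simpa [P, hx, hkA] using hfar k hk
  linarith [three_eighths_le_stCount_mod_two hm hn]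

theorem stmt_17 (I : Set (Set ℕ)) (hI : IsAdmissibleIdeal I) (A : Set ℕ)
    (hA : A ∈ I) (hAinf : A.Infinite)
    (hd : ITendsto I (stCount (fun k => k ∈ A)) 0)
    (x : ℕ → ℝ) (hx : ∀ k : ℕ, x k = if k ∈ A then (k : ℝ) else (-1 : ℝ) ^ k)
    (r : ℝ) (hr0 : 0 ≤ r) (hr : r < 1) :
    {ξ : ℝ | RoughIStatLim I x r ξ} = ∅ :=
  stmt_17_general I hI A hd x hx r hr
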